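/- There exists ε₁ > 0 such that for all ε with |ε| ≤ ε₁ and all z in the closed unit disc of ℂ, one has |(3 + 6z - z²)/8 + 2iε(z-1)² - iε(z-1)³| ≤ 1, with equality if and only if z = 1. -/

import Mathlib

/-!
Put `d = ‖z‖² - 1 ≤ 0` and `q = ‖z - 1‖²`. Expanding, `‖FEps 0 z‖² = 1 + d (1/2 + 3q/16 - d/8) - 3q²/64`,
which is at most `1 + d/2 - 3q²/64`. On the unit circle the unperturbed map is thus only quartically
contracting near `z = 1`, so the perturbation cannot be handled by the triangle inequality; but the
term linear in `ε` is `ε · Im z · (-4d + 2d² - 3dq + 3q²/4)`, which is also `O(|d| + q²)`, so for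
`|ε| ≤ 1/128` both it and the `ε²` term are absorbed, leaving `‖FEps ε z‖² ≤ 1 - ‖z - 1‖⁴ / 32`.
-/

noncomputable def FEps (ε : ℝ) (z : ℂ) : ℂ :=
  (3 + 6 * z - z ^ 2) / 8 + 2 * Complex.I * ε * (z - 1) ^ 2 - Complex.I * ε * (z - 1) ^ 3

open Complex

lemma normSq_FEps (ε : ℝ) (z : ℂ) :
    normSq (FEps ε z) =
      1 + (normSq z - 1) * (1 / 2 + 3 * normSq (z - 1) / 16 - (normSq z - 1) / 8)
        - 3 * normSq (z - 1) ^ 2 / 64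
        + ε * z.im * (-4 * (normSq z - 1) + 2 * (normSq z - 1) ^ 2
          - 3 * (normSq z - 1) * normSq (z - 1) + 3 * normSq (z - 1) ^ 2 / 4)
        + ε ^ 2 * normSq (z - 1) ^ 2 * normSq (3 - z) := by
  simp [FEps, normSq_apply, pow_succ]
  ring

lemma normSq_expansion_le {d b q t ε : ℝ} (hd : d ≤ 0) (hd' : -1 ≤ d) (hb : |b| ≤ 1)
    (hq : 0 ≤ q) (hq' : q ≤ 4) (ht : t ≤ 16) (hε : |ε| ≤ 1 / 128) :
    d * (1 / 2 + 3 * q / 16 - d / 8) - 3 * q ^ 2 / 64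
      + ε * b * (-4 * d + 2 * d ^ 2 - 3 * d * q + 3 * q ^ 2 / 4) + ε ^ 2 * q ^ 2 * t
      ≤ -q ^ 2 / 32 := by
  have hmain : d * (1 / 2 + 3 * q / 16 - d / 8) ≤ d / 2 := by nlinarith
  have hεb : |ε * b| ≤ 1 / 128 := by
    rw [abs_mul]
    nlinarith [abs_nonneg ε, abs_nonneg b]
  have hM : |-4 * d + 2 * d ^ 2 - 3 * d * q + 3 * q ^ 2 / 4| ≤ 18 * -d + 3 * q ^ 2 / 4 :=
    abs_le.2 ⟨by nlinarith, by nlinarith⟩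
  have hcross : ε * b * (-4 * d + 2 * d ^ 2 - 3 * d * q + 3 * q ^ 2 / 4)
      ≤ (18 * -d + 3 * q ^ 2 / 4) / 128 := by
    calc _ ≤ |ε * b| * |-4 * d + 2 * d ^ 2 - 3 * d * q + 3 * q ^ 2 / 4| := by
          rw [← abs_mul]; exact le_abs_self _
      _ ≤ 1 / 128 * (18 * -d + 3 * q ^ 2 / 4) := by gcongr
      _ = _ := by ring
  have hε2 : ε ^ 2 ≤ 1 / 16384 := by
    rw [← sq_abs]; nlinarith [abs_nonneg ε]
  have hquad : ε ^ 2 * q ^ 2 * t ≤ q ^ 2 / 1024 := by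
    nlinarith [sq_nonneg ε, sq_nonneg q, mul_nonneg (sq_nonneg ε) (sq_nonneg q)]
  nlinarith

lemma norm_FEps_sq_le {ε : ℝ} (hε : |ε| ≤ 1 / 128) {z : ℂ} (hz : ‖z‖ ≤ 1) :
    ‖FEps ε z‖ ^ 2 ≤ 1 - ‖z - 1‖ ^ 4 / 32 := by
  have hz1 : ‖z - 1‖ ≤ 2 := (norm_sub_le _ _).trans (by rw [norm_one]; linarith)
  have hz3 : ‖3 - z‖ ≤ 4 := (norm_sub_le _ _).trans (by norm_num; linarith)
  have key := normSq_expansion_le (d := ‖z‖ ^ 2 - 1) (b := z.im) (q := ‖z - 1‖ ^ 2)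
    (t := ‖3 - z‖ ^ 2) (ε := ε) (by nlinarith [norm_nonneg z]) (by nlinarith [norm_nonneg z])
    ((abs_im_le_norm z).trans hz) (by positivity) (by nlinarith [norm_nonneg (z - 1)])
    (by nlinarith [norm_nonneg (3 - z)]) hε
  rw [← normSq_eq_norm_sq, normSq_FEps]
  simp only [normSq_eq_norm_sq]
  linear_combination key

theorem exists_eps1_selfmap :
    ∃ ε₁ > (0:ℝ), ∀ ε : ℝ, |ε| ≤ ε₁ → ∀ z : ℂ, ‖z‖ ≤ 1 →
      ‖FEps ε z‖ ≤ 1 ∧ (‖FEps ε z‖ = 1 ↔ z = 1) := by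
  refine ⟨1 / 128, by norm_num, fun ε hε z hz => ?_⟩
  have hF := norm_FEps_sq_le hε hz
  have hz1 : 0 ≤ ‖z - 1‖ ^ 4 := by positivity
  refine ⟨(sq_le_one_iff₀ (norm_nonneg _)).1 (by linarith), fun h => ?_, fun h => ?_⟩
  · rw [h, one_pow] at hF
    have : ‖z - 1‖ ^ 4 = 0 := by linarith
    simpa [sub_eq_zero] using this
  · subst h
    norm_num [FEps]
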